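/- Let Γ_1 and Γ_2 be edge-disjoint strongly regular graphs on a common vertex set V of size v, with adjacency matrices A_1 and A_2 satisfying A_1 A_2 = A_2 A_1. Suppose Γ_1 is of strictly Latin square type with restricted eigenvalues a_1, b_1 and Γ_2 is of strictly negative Latin square type with restricted eigenvalues a_2, b_2. Then for every θ ∈ {a_1, b_1} and every η ∈ {a_2, b_2} there exists a nonzero vector x ∈ ℝ^V with Σ_{u∈V} x_u = 0, A_1 x = θx, and A_2 x = ηx. -/
import Mathlib


open Matrix

section Defs

variable {X ι : Type*}

/-- The all-ones matrix `J`. -/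
def allOnes (X : Type*) : Matrix X X ℝ := Matrix.of fun _ _ => 1

/-- A family of symmetric 01-matrices indexed by `ι` forming a (symmetric) association
scheme, with the identity relation at index `o`. -/
def IsASFamily [Fintype X] [DecidableEq X] [Fintype ι] (A : ι → Matrix X X ℝ) (o : ι) :
    Prop :=
  A o = 1 ∧
  ∑ i, A i = allOnes X ∧
  (∀ i, (A i).IsSymm) ∧
  (∀ i x y, A i x y = 0 ∨ A i x y = 1) ∧
  ∀ i j, ∃ p : ι → ℝ, A i * A j = ∑ h, p h • A h

/-- A `d`-class association scheme, given by its relations `A 0, …, A d`. -/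
abbrev IsAssociationScheme [Fintype X] [DecidableEq X] {d : ℕ}
    (A : Fin (d + 1) → Matrix X X ℝ) : Prop :=
  IsASFamily A 0

/-- The family of fused relations along the class map `f`. -/
def fusedFamily {d d' : ℕ} (A : Fin (d + 1) → Matrix X X ℝ)
    (f : Fin (d + 1) → Fin (d' + 1)) : Fin (d' + 1) → Matrix X X ℝ :=
  fun i => ∑ k ∈ Finset.univ.filter (fun k => f k = i), A k

/-- `f` encodes a partition of `{0, …, d}` having `{0}` as a class (classes = fibers). -/
def IsFusionMap {d d' : ℕ} (f : Fin (d + 1) → Fin (d' + 1)) : Prop :=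
  Function.Surjective f ∧ ∀ k, f k = 0 ↔ k = 0

/-- An association scheme is amorphic if every partition of the index set with `{0}` as a
class gives rise to a fusion scheme. -/
def IsAmorphic [Fintype X] [DecidableEq X] {d : ℕ} (A : Fin (d + 1) → Matrix X X ℝ) :
    Prop :=
  ∀ (d' : ℕ) (f : Fin (d + 1) → Fin (d' + 1)), IsFusionMap f →
    IsAssociationScheme (fusedFamily A f)

/-- `f` encodes the partition of `{0, …, d}` whose unique non-singleton class is `{i, j}`. -/
def PairPartition {d : ℕ} (f : Fin (d + 1) → Fin (d - 1 + 1)) (i j : Fin (d + 1)) : Prop :=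
  IsFusionMap f ∧ ∀ k l, f k = f l ↔ (k = l ∨ (k = i ∧ l = j) ∨ (k = j ∧ l = i))

/-- The pair of non-trivial relations `{A i, A j}` fuses. -/
def PairFuses [Fintype X] [DecidableEq X] {d : ℕ} (A : Fin (d + 1) → Matrix X X ℝ)
    (i j : Fin (d + 1)) : Prop :=
  i ≠ 0 ∧ j ≠ 0 ∧ i ≠ j ∧
  ∃ f : Fin (d + 1) → Fin (d - 1 + 1), PairPartition f i j ∧
    IsAssociationScheme (fusedFamily A f)

/-- The fusing-relations graph, on the vertex set `{1, …, d}`. -/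
def fusingRelationsGraph [Fintype X] [DecidableEq X] {d : ℕ}
    (A : Fin (d + 1) → Matrix X X ℝ) : SimpleGraph {i : Fin (d + 1) // i ≠ 0} :=
  SimpleGraph.fromRel fun i j => PairFuses A i.1 j.1

/-- `E 0, …, E d` is the family of minimal idempotents of the scheme `A 0, …, A d`. -/
def IsMinimalIdempotentFamily [Fintype X] [DecidableEq X] {d : ℕ}
    (A E : Fin (d + 1) → Matrix X X ℝ) : Prop :=
  E 0 = (Fintype.card X : ℝ)⁻¹ • allOnes X ∧
  ∑ j, E j = 1 ∧
  (∀ i j, E i * E j = if i = j then E i else 0) ∧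
  (∀ j, (E j).IsSymm) ∧
  ∀ j, ∃ c : Fin (d + 1) → ℝ, E j = ∑ i, c i • A i

/-- The pair of non-trivial minimal idempotents `{E i, E j}` fuses: some fusion scheme of
the scheme has `{E k : k ∉ {i,j}} ∪ {E i + E j}` as its set of minimal idempotents. -/
def IdemPairFuses [Fintype X] [DecidableEq X] {d : ℕ} (A E : Fin (d + 1) → Matrix X X ℝ)
    (i j : Fin (d + 1)) : Prop :=
  i ≠ 0 ∧ j ≠ 0 ∧ i ≠ j ∧
  ∃ (d' : ℕ) (f : Fin (d + 1) → Fin (d' + 1)), IsFusionMap f ∧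
    IsAssociationScheme (fusedFamily A f) ∧
    ∃ E' : Fin (d' + 1) → Matrix X X ℝ,
      IsMinimalIdempotentFamily (fusedFamily A f) E' ∧
      Set.range E' = (E '' {k | k ≠ i ∧ k ≠ j}) ∪ {E i + E j}

/-- The fusing-idempotents graph, on the vertex set `{1, …, d}`. -/
def fusingIdempotentsGraph [Fintype X] [DecidableEq X] {d : ℕ}
    (A E : Fin (d + 1) → Matrix X X ℝ) : SimpleGraph {i : Fin (d + 1) // i ≠ 0} :=
  SimpleGraph.fromRel fun i j => IdemPairFuses A E i.1 j.1

/-- `A` is the adjacency matrix of a strongly regular graph with parameters `(v,k,l,m)`: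
a symmetric 01-matrix with zero diagonal, non-empty, non-complete, with
`A² = k I + l A + m (J - I - A)`. -/
def IsSRGMatrix [Fintype X] [DecidableEq X] (A : Matrix X X ℝ) (v k l m : ℕ) : Prop :=
  Fintype.card X = v ∧
  A.IsSymm ∧ (∀ x, A x x = 0) ∧ (∀ x y, A x y = 0 ∨ A x y = 1) ∧
  A ≠ 0 ∧ A ≠ allOnes X - 1 ∧
  A * A = (k : ℝ) • (1 : Matrix X X ℝ) + (l : ℝ) • A + (m : ℝ) • (allOnes X - 1 - A)

/-- `x` is a restricted eigenvalue of a strongly regular graph with parameters `(v,k,l,m)`,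
i.e. a root of `x² - (l - m) x - (k - m)`. -/
def IsRestrictedEig (k l m : ℕ) (x : ℝ) : Prop :=
  x ^ 2 - ((l : ℝ) - (m : ℝ)) * x - ((k : ℝ) - (m : ℝ)) = 0

/-- Strongly regular parameters of Latin square type: `v = n²`, `k = t (n-1)` and the
restricted eigenvalues are `n - t` and `-t`, for positive integers `n`, `t`. -/
def IsLSParams (v k l m : ℕ) : Prop :=
  ∃ n t : ℤ, 0 < n ∧ 0 < t ∧ (v : ℤ) = n ^ 2 ∧ (k : ℤ) = t * (n - 1) ∧
    IsRestrictedEig k l m ((n : ℝ) - (t : ℝ)) ∧ IsRestrictedEig k l m (-(t : ℝ))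

/-- Strongly regular parameters of negative Latin square type. -/
def IsNLSParams (v k l m : ℕ) : Prop :=
  ∃ n t : ℤ, n < 0 ∧ t < 0 ∧ (v : ℤ) = n ^ 2 ∧ (k : ℤ) = t * (n - 1) ∧
    IsRestrictedEig k l m ((n : ℝ) - (t : ℝ)) ∧ IsRestrictedEig k l m (-(t : ℝ))

/-- `A` is the adjacency matrix of a strongly regular graph of Latin square type. -/
def IsLSTypeSRG [Fintype X] [DecidableEq X] (A : Matrix X X ℝ) : Prop :=
  ∃ v k l m : ℕ, IsSRGMatrix A v k l m ∧ IsLSParams v k l m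

/-- `A` is the adjacency matrix of a strongly regular graph of negative Latin square type. -/
def IsNLSTypeSRG [Fintype X] [DecidableEq X] (A : Matrix X X ℝ) : Prop :=
  ∃ v k l m : ℕ, IsSRGMatrix A v k l m ∧ IsNLSParams v k l m

/-- Strongly regular parameters of a conference graph: `k = (v-1)/2` and restricted
eigenvalues `(-1 ± √v)/2`. -/
def IsConferenceParams (v k l m : ℕ) : Prop :=
  2 * k + 1 = v ∧ IsRestrictedEig k l m ((-1 + Real.sqrt v) / 2) ∧
    IsRestrictedEig k l m ((-1 - Real.sqrt v) / 2)

/-- The `j`-th idempotent (read off from the second eigenmatrix `Q` of a scheme on `v`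
points) is strongly regular of Latin square type: `v = n²`, its rank `Q 0 j` equals
`t (n-1)`, and its restricted dual eigenvalues are exactly `n - t` and `-t`. -/
def IdemLSType {d : ℕ} (v : ℕ) (Q : Matrix (Fin (d + 1)) (Fin (d + 1)) ℝ)
    (j : Fin (d + 1)) : Prop :=
  ∃ n t : ℤ, 0 < n ∧ 0 < t ∧ (v : ℤ) = n ^ 2 ∧ Q 0 j = ((t * (n - 1) : ℤ) : ℝ) ∧
    {x : ℝ | ∃ i : Fin (d + 1), i ≠ 0 ∧ Q i j = x} = {(n : ℝ) - (t : ℝ), -(t : ℝ)}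

/-- Strongly regular idempotent of negative Latin square type. -/
def IdemNLSType {d : ℕ} (v : ℕ) (Q : Matrix (Fin (d + 1)) (Fin (d + 1)) ℝ)
    (j : Fin (d + 1)) : Prop :=
  ∃ n t : ℤ, n < 0 ∧ t < 0 ∧ (v : ℤ) = n ^ 2 ∧ Q 0 j = ((t * (n - 1) : ℤ) : ℝ) ∧
    {x : ℝ | ∃ i : Fin (d + 1), i ≠ 0 ∧ Q i j = x} = {(n : ℝ) - (t : ℝ), -(t : ℝ)}

/-- The linear functional `x ↦ ∑ u, x u`. -/
noncomputable def sumLin (X : Type*) [Fintype X] : (X → ℝ) →ₗ[ℝ] ℝ where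
  toFun x := ∑ u, x u
  map_add' x y := by simp [Finset.sum_add_distrib]
  map_smul' c x := by simp [Finset.mul_sum]

/-- The common restricted eigenspace `{x : ∑ x = 0, A₁ x = θ x, A₂ x = η x}`. -/
noncomputable def restrictedEigenspace [Fintype X] (A1 A2 : Matrix X X ℝ) (θ η : ℝ) :
    Submodule ℝ (X → ℝ) :=
  LinearMap.ker (sumLin X) ⊓
    LinearMap.ker (A1.mulVecLin - θ • (LinearMap.id : (X → ℝ) →ₗ[ℝ] X → ℝ)) ⊓
    LinearMap.ker (A2.mulVecLin - η • (LinearMap.id : (X → ℝ) →ₗ[ℝ] X → ℝ))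

/-- Fusing the relations `A i` and `A j` produces a scheme whose set of minimal
idempotents is `{E k : k ∉ {i', j'}} ∪ {E i' + E j'}`. -/
def FusionIdemSetEq [Fintype X] [DecidableEq X] {d : ℕ} (A E : Fin (d + 1) → Matrix X X ℝ)
    (i j i' j' : Fin (d + 1)) : Prop :=
  ∀ f : Fin (d + 1) → Fin (d - 1 + 1), PairPartition f i j →
    ∀ E' : Fin (d - 1 + 1) → Matrix X X ℝ,
      IsMinimalIdempotentFamily (fusedFamily A f) E' →
      Set.range E' = (E '' {k | k ≠ i' ∧ k ≠ j'}) ∪ {E i' + E j'}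

end Defs

section Aux
set_option linter.unusedSectionVars false
variable {X : Type*} [Fintype X] [DecidableEq X]

lemma allOnes_transpose : (allOnes X)ᵀ = allOnes X := by ext i j; simp [allOnes]

lemma allOnes_mul_allOnes :
    allOnes X * allOnes X = (Fintype.card X : ℝ) • allOnes X := by
  ext i j; simp [allOnes, Matrix.mul_apply]

lemma trace_allOnes : (allOnes X).trace = (Fintype.card X : ℝ) := by
  simp [Matrix.trace, allOnes, Matrix.diag]

lemma mul_allOnes_of_symm {A : Matrix X X ℝ} {k : ℝ} (hs : A.IsSymm)
    (h : A * allOnes X = k • allOnes X) : allOnes X * A = k • allOnes X := by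
  have := congrArg Matrix.transpose h
  rwa [Matrix.transpose_mul, allOnes_transpose, hs.eq, Matrix.transpose_smul,
    allOnes_transpose] at this

lemma master [Nonempty X]
    (A1 A2 : Matrix X X ℝ) (k1 k2 θ θ' η η' : ℝ)
    (hs1 : A1.IsSymm) (hs2 : A2.IsSymm)
    (htr1 : A1.trace = 0) (htr2 : A2.trace = 0)
    (htr12 : (A1 * A2).trace = 0)
    (hcomm : A1 * A2 = A2 * A1)
    (hJ1 : A1 * allOnes X = k1 • allOnes X)
    (hJ2 : A2 * allOnes X = k2 • allOnes X)
    (hq1 : A1 * A1 = (θ + θ') • A1 - (θ * θ') • (1 : Matrix X X ℝ)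
      + (((k1 - θ) * (k1 - θ')) / (Fintype.card X : ℝ)) • allOnes X)
    (hq2 : A2 * A2 = (η + η') • A2 - (η * η') • (1 : Matrix X X ℝ)
      + (((k2 - η) * (k2 - η')) / (Fintype.card X : ℝ)) • allOnes X) :
    0 ≤ (θ - θ') * (η - η') *
        (θ' * η' * (Fintype.card X : ℝ) - (k1 - θ') * (k2 - η')) ∧
      (θ' * η' * (Fintype.card X : ℝ) - (k1 - θ') * (k2 - η') ≠ 0 →
        ∃ x : X → ℝ, x ≠ 0 ∧ ∑ u, x u = 0 ∧
          A1.mulVec x = θ • x ∧ A2.mulVec x = η • x) := by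
  set v : ℝ := (Fintype.card X : ℝ) with hvdef
  have hv0 : v ≠ 0 := by
    have : 0 < Fintype.card X := Fintype.card_pos
    positivity
  clear_value v
  set J : Matrix X X ℝ := allOnes X with hJdef
  set F : Matrix X X ℝ :=
    A1 * A2 - η' • A1 - θ' • A2 + (θ' * η') • (1 : Matrix X X ℝ)
      - ((k1 - θ') * (k2 - η') / v) • J with hF
  have hJA1 : J * A1 = k1 • J := mul_allOnes_of_symm hs1 hJ1
  have hJA2 : J * A2 = k2 • J := mul_allOnes_of_symm hs2 hJ2
  have hJJ : J * J = v • J := by rw [hvdef, hJdef]; exact allOnes_mul_allOnes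
  -- A1 * F = θ • F
  have hA1B : A1 * (A1 * A2) = (θ + θ') • (A1 * A2) - (θ * θ') • A2
      + (((k1 - θ) * (k1 - θ')) / v * k2) • J := by
    rw [← mul_assoc, hq1]
    simp only [Matrix.sub_mul, Matrix.add_mul, Matrix.smul_mul, Matrix.one_mul, hJA2,
      smul_smul]
  have hA1F : A1 * F = θ • F := by
    rw [hF]
    simp only [Matrix.mul_sub, Matrix.mul_add, Matrix.mul_smul, Matrix.mul_one,
      smul_sub, smul_add, hA1B, hq1, hJ1]
    match_scalars
    all_goals try field_simp
    all_goals ring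
  have hA2F : A2 * F = η • F := by
    rw [hF]
    have h1 : A2 * (A1 * A2) = (η + η') • (A1 * A2) - (η * η') • A1
        + (((k2 - η) * (k2 - η')) / v * k1) • J := by
      rw [hcomm, ← mul_assoc, hq2]
      simp only [Matrix.sub_mul, Matrix.add_mul, Matrix.smul_mul, Matrix.one_mul, hJA1,
        smul_smul, ← hcomm]
    simp only [Matrix.mul_sub, Matrix.mul_add, Matrix.mul_smul, Matrix.mul_one,
      smul_sub, smul_add, h1, hq2, hJ2, ← hcomm]
    match_scalars
    all_goals try field_simp
    all_goals ring
  -- J * F = 0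
  have hJB : J * (A1 * A2) = (k1 * k2) • J := by
    rw [← mul_assoc, hJA1, Matrix.smul_mul, hJA2, smul_smul]
  have hJF : J * F = 0 := by
    rw [hF]
    simp only [Matrix.mul_sub, Matrix.mul_add, Matrix.mul_smul, Matrix.mul_one,
      hJB, hJA1, hJA2, hJJ, smul_smul]
    match_scalars
    field_simp
    ring
  have hJT : Jᵀ = J := by rw [hJdef]; exact allOnes_transpose
  have hFsymm : F.IsSymm := by
    rw [hF]
    unfold Matrix.IsSymm
    simp only [Matrix.transpose_sub, Matrix.transpose_add, Matrix.transpose_smul,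
      Matrix.transpose_mul, hs1.eq, hs2.eq, Matrix.transpose_one, hJT, hcomm]
  have hFA1 : F * A1 = θ • F := by
    have h := congrArg Matrix.transpose hA1F
    rwa [Matrix.transpose_mul, hs1.eq, hFsymm.eq, Matrix.transpose_smul, hFsymm.eq] at h
  have hFA2 : F * A2 = η • F := by
    have h := congrArg Matrix.transpose hA2F
    rwa [Matrix.transpose_mul, hs2.eq, hFsymm.eq, Matrix.transpose_smul, hFsymm.eq] at h
  have hFJ : F * J = 0 := by
    have h := congrArg Matrix.transpose hJF
    rwa [Matrix.transpose_mul, hJT, hFsymm.eq, Matrix.transpose_zero] at h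
  have hFB : F * (A1 * A2) = (θ * η) • F := by
    rw [← mul_assoc, hFA1, Matrix.smul_mul, hFA2, smul_smul]
  have hFF : F * F = ((θ - θ') * (η - η')) • F := by
    nth_rewrite 2 [hF]
    simp only [Matrix.mul_sub, Matrix.mul_add, Matrix.mul_smul, Matrix.mul_one,
      hFB, hFA1, hFA2, hFJ]
    match_scalars
    all_goals try field_simp
    all_goals ring
  -- trace of F
  have htrF : F.trace = θ' * η' * v - (k1 - θ') * (k2 - η') := by
    rw [hF]
    have htrJ : J.trace = v := by rw [hJdef, hvdef]; exact trace_allOnes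
    simp only [Matrix.trace_sub, Matrix.trace_add, Matrix.trace_smul, Matrix.trace_one,
      htr12, htr1, htr2, htrJ, smul_eq_mul, ← hvdef]
    try field_simp
    try ring
  constructor
  · -- trace nonnegativity
    have h1 : ((θ - θ') * (η - η')) * F.trace = (F * F).trace := by
      rw [hFF, Matrix.trace_smul, smul_eq_mul]
    have h2 : 0 ≤ (F * F).trace := by
      have : (F * F).trace = ∑ i, ∑ j, (F i j) ^ 2 := by
        rw [Matrix.trace]
        apply Finset.sum_congr rfl
        intro i _
        rw [Matrix.diag, Matrix.mul_apply]
        apply Finset.sum_congr rfl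
        intro j _
        have : F j i = F i j := hFsymm.apply i j
        rw [this, sq]
      rw [this]
      apply Finset.sum_nonneg
      intro i _
      apply Finset.sum_nonneg
      intro j _
      exact sq_nonneg _
    rw [htrF] at h1
    nlinarith [h1, h2]
  · intro hτ
    have hFne : F ≠ 0 := by
      intro h0
      rw [h0, Matrix.trace_zero] at htrF
      exact hτ htrF.symm
    have : ∃ i j, F i j ≠ 0 := by
      by_contra h
      push_neg at h
      exact hFne (by ext i j; simpa using h i j)
    obtain ⟨i, j, hij⟩ := this
    refine ⟨fun u => F u j, ?_, ?_, ?_, ?_⟩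
    · intro h0
      exact hij (congrFun h0 i)
    · have := congrFun (congrFun hJF i) j
      simp only [Matrix.mul_apply, Matrix.zero_apply, hJdef, allOnes, Matrix.of_apply,
        one_mul] at this
      exact this
    · funext u
      have := congrFun (congrFun hA1F u) j
      simp only [Matrix.mul_apply, Matrix.smul_apply, smul_eq_mul] at this
      simpa [Matrix.mulVec, dotProduct, Pi.smul_apply, smul_eq_mul] using this
    · funext u
      have := congrFun (congrFun hA2F u) j
      simp only [Matrix.mul_apply, Matrix.smul_apply, smul_eq_mul] at this
      simpa [Matrix.mulVec, dotProduct, Pi.smul_apply, smul_eq_mul] using this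

lemma srg_nonempty {A : Matrix X X ℝ} {v k l m : ℕ} (h : IsSRGMatrix A v k l m) :
    Nonempty X := by
  by_contra hne
  rw [not_nonempty_iff] at hne
  exact h.2.2.2.2.1 (by ext i j; exact (hne.false i).elim)

lemma srg_mul_allOnes {A : Matrix X X ℝ} {v k l m : ℕ} (h : IsSRGMatrix A v k l m) :
    A * allOnes X = (k : ℝ) • allOnes X := by
  obtain ⟨hv, hs, hd, h01, -, -, heq⟩ := h
  have hrow : ∀ x, ∑ z, A x z = (k : ℝ) := by
    intro x
    have h2 := congrFun (congrFun heq x) x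
    rw [Matrix.mul_apply] at h2
    have e1 : ∀ z, A x z * A z x = A x z := by
      intro z
      rw [hs.apply x z]
      rcases h01 x z with h | h <;> rw [h] <;> ring
    rw [Finset.sum_congr rfl (fun z _ => e1 z)] at h2
    simpa [Matrix.add_apply, Matrix.smul_apply, Matrix.sub_apply, Matrix.one_apply_eq,
      allOnes, hd x] using h2
  ext x y
  simp [Matrix.mul_apply, allOnes, hrow x]

lemma srg_card_id {A : Matrix X X ℝ} {v k l m : ℕ} (h : IsSRGMatrix A v k l m) :
    (k : ℝ) ^ 2 = (k : ℝ) + (l : ℝ) * k + (m : ℝ) * ((Fintype.card X : ℝ) - 1 - k) := by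
  have hne : Nonempty X := srg_nonempty h
  have hAJ := srg_mul_allOnes h
  have h2 : A * A * allOnes X = ((k : ℝ) ^ 2) • allOnes X := by
    rw [Matrix.mul_assoc, hAJ, Matrix.mul_smul, hAJ, smul_smul, sq]
  have hJJ : allOnes X * allOnes X = (Fintype.card X : ℝ) • allOnes X := by
    ext i j; simp [allOnes, Matrix.mul_apply]
  rw [h.2.2.2.2.2.2] at h2
  have h3 : ((k : ℝ) • (1 : Matrix X X ℝ) + (l : ℝ) • A + (m : ℝ) • (allOnes X - 1 - A))
      * allOnes X = ((k : ℝ) + (l : ℝ) * k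
        + (m : ℝ) * ((Fintype.card X : ℝ) - 1 - k)) • allOnes X := by
    simp only [Matrix.add_mul, Matrix.sub_mul, Matrix.smul_mul, Matrix.one_mul, hAJ, hJJ,
      smul_sub, smul_smul]
    match_scalars
    ring
  rw [h3] at h2
  obtain ⟨x⟩ := hne
  have h4 := congrFun (congrFun h2 x) x
  simpa [allOnes, Matrix.smul_apply] using h4.symm

lemma srg_quad {A : Matrix X X ℝ} {v k l m : ℕ} (h : IsSRGMatrix A v k l m)
    (θ θ' : ℝ) (hsum : θ + θ' = (l : ℝ) - m) (hprod : θ * θ' = (m : ℝ) - k) :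
    A * A = (θ + θ') • A - (θ * θ') • (1 : Matrix X X ℝ)
      + ((((k : ℝ) - θ) * ((k : ℝ) - θ')) / (Fintype.card X : ℝ)) • allOnes X := by
  have hne : Nonempty X := srg_nonempty h
  have hid := srg_card_id h
  have hv0 : (Fintype.card X : ℝ) ≠ 0 := by
    have : 0 < Fintype.card X := Fintype.card_pos
    positivity
  rw [h.2.2.2.2.2.2]
  match_scalars
  · linear_combination hprod
  · linear_combination -hsum
  · field_simp
    first
    | linear_combination -hid + (k : ℝ) * hsum - hprod
    | linear_combination hid - (k : ℝ) * hsum + hprod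
    | linear_combination hid + (k : ℝ) * hsum - hprod
    | linear_combination -hid - (k : ℝ) * hsum + hprod
end Aux

set_option maxHeartbeats 1000000 in
/-- Two edge-disjoint commuting strongly regular graphs, one of strictly
Latin square type and one of strictly negative Latin square type, share eigenvectors
(orthogonal to the all-ones vector) for all four combinations of restricted eigenvalues. -/
theorem strictLS_strictNLS_share_eigenvectors
    {X : Type*} [Fintype X] [DecidableEq X] (A1 A2 : Matrix X X ℝ)
    (v k1 l1 m1 k2 l2 m2 : ℕ) (a1 b1 a2 b2 : ℝ)
    (h1 : IsSRGMatrix A1 v k1 l1 m1) (h2 : IsSRGMatrix A2 v k2 l2 m2)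
    (hdisj : ∀ x y, A1 x y * A2 x y = 0)
    (hcomm : A1 * A2 = A2 * A1)
    (hLS : IsLSParams v k1 l1 m1) (hC1 : ¬IsConferenceParams v k1 l1 m1)
    (hNLS : IsNLSParams v k2 l2 m2) (hC2 : ¬IsConferenceParams v k2 l2 m2)
    (ha1 : IsRestrictedEig k1 l1 m1 a1) (hb1 : IsRestrictedEig k1 l1 m1 b1)
    (hab1 : a1 ≠ b1)
    (ha2 : IsRestrictedEig k2 l2 m2 a2) (hb2 : IsRestrictedEig k2 l2 m2 b2)
    (hab2 : a2 ≠ b2) :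
    ∀ θ ∈ ({a1, b1} : Set ℝ), ∀ η ∈ ({a2, b2} : Set ℝ),
      ∃ x : X → ℝ, x ≠ 0 ∧ ∑ u, x u = 0 ∧
        A1.mulVec x = θ • x ∧ A2.mulVec x = η • x := by
  have hX : Nonempty X := srg_nonempty h1
  have hs1 := h1.2.1
  have hs2 := h2.2.1
  have hd1 := h1.2.2.1
  have hd2 := h2.2.2.1
  have hv1 := h1.1
  have htrA1 : A1.trace = 0 := by simp [Matrix.trace, Matrix.diag, hd1]
  have htrA2 : A2.trace = 0 := by simp [Matrix.trace, Matrix.diag, hd2]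
  have htr12 : (A1 * A2).trace = 0 := by
    have e : ∀ x y, A1 x y * A2 y x = 0 := by
      intro x y
      rw [hs2.apply x y]
      exact hdisj x y
    simp [Matrix.trace, Matrix.diag, Matrix.mul_apply, e]
  obtain ⟨n, t, hn, ht, hvn, hk1n, hre1a, hre1b⟩ := hLS
  obtain ⟨n2, t2, hn2, ht2, hvn2, hk2n, hre2a, hre2b⟩ := hNLS
  have hn2n : n2 = -n := by
    have h0 : (n2 - n) * (n2 + n) = 0 := by linear_combination hvn2.symm.trans hvn
    rcases mul_eq_zero.mp h0 with h' | h'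
    · exfalso; omega
    · omega
  subst hn2n
  -- real casts
  have hcardR : ((Fintype.card X : ℕ) : ℝ) = ((n : ℤ) : ℝ) ^ 2 := by
    rw [hv1]; exact_mod_cast hvn
  have hk1R : ((k1 : ℕ) : ℝ) = ((t : ℤ) : ℝ) * (((n : ℤ) : ℝ) - 1) := by
    exact_mod_cast hk1n
  have hk2R : ((k2 : ℕ) : ℝ) = ((t2 : ℤ) : ℝ) * (-((n : ℤ) : ℝ) - 1) := by
    exact_mod_cast hk2n
  have hNR : (1 : ℝ) ≤ ((n : ℤ) : ℝ) := by exact_mod_cast hn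
  have hTR : (1 : ℝ) ≤ ((t : ℤ) : ℝ) := by exact_mod_cast ht
  have hT2R : ((t2 : ℤ) : ℝ) ≤ -1 := by
    have : t2 ≤ -1 := by omega
    exact_mod_cast this
  -- Vieta
  have hab1sum : a1 + b1 = (l1 : ℝ) - m1 := by
    have hd : (a1 - b1) * (a1 + b1 - ((l1 : ℝ) - m1)) = 0 := by
      unfold IsRestrictedEig at ha1 hb1
      linear_combination ha1 - hb1
    rcases mul_eq_zero.mp hd with h' | h'
    · exact absurd (sub_eq_zero.mp h') hab1
    · have := sub_eq_zero.mp h'; linarith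
  have hab1prod : a1 * b1 = (m1 : ℝ) - k1 := by
    unfold IsRestrictedEig at ha1
    linear_combination a1 * hab1sum - ha1
  have hab2sum : a2 + b2 = (l2 : ℝ) - m2 := by
    have hd : (a2 - b2) * (a2 + b2 - ((l2 : ℝ) - m2)) = 0 := by
      unfold IsRestrictedEig at ha2 hb2
      linear_combination ha2 - hb2
    rcases mul_eq_zero.mp hd with h' | h'
    · exact absurd (sub_eq_zero.mp h') hab2
    · have := sub_eq_zero.mp h'; linarith
  have hab2prod : a2 * b2 = (m2 : ℝ) - k2 := by
    unfold IsRestrictedEig at ha2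
    linear_combination a2 * hab2sum - ha2
  have hroots1 : ∀ x : ℝ, IsRestrictedEig k1 l1 m1 x → x = a1 ∨ x = b1 := by
    intro x hx
    have hd : (x - a1) * (x - b1) = 0 := by
      unfold IsRestrictedEig at hx
      linear_combination hx - x * hab1sum + hab1prod
    rcases mul_eq_zero.mp hd with h' | h'
    · exact Or.inl (sub_eq_zero.mp h')
    · exact Or.inr (sub_eq_zero.mp h')
  have hroots2 : ∀ x : ℝ, IsRestrictedEig k2 l2 m2 x → x = a2 ∨ x = b2 := by
    intro x hx
    have hd : (x - a2) * (x - b2) = 0 := by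
      unfold IsRestrictedEig at hx
      linear_combination hx - x * hab2sum + hab2prod
    rcases mul_eq_zero.mp hd with h' | h'
    · exact Or.inl (sub_eq_zero.mp h')
    · exact Or.inr (sub_eq_zero.mp h')
  have hθne : (((n : ℤ) : ℝ) - ((t : ℤ) : ℝ)) ≠ -((t : ℤ) : ℝ) := by
    intro hc; linarith
  have hηne : ((((-n) : ℤ) : ℝ) - ((t2 : ℤ) : ℝ)) ≠ -((t2 : ℤ) : ℝ) := by
    intro hc
    push_cast at hc
    linarith
  have hpair1 : (((n : ℤ) : ℝ) - t = a1 ∧ -((t : ℤ) : ℝ) = b1) ∨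
      (((n : ℤ) : ℝ) - t = b1 ∧ -((t : ℤ) : ℝ) = a1) := by
    rcases hroots1 _ hre1a with h' | h' <;> rcases hroots1 _ hre1b with h'' | h''
    · exact absurd (h'.trans h''.symm) hθne
    · exact Or.inl ⟨h', h''⟩
    · exact Or.inr ⟨h', h''⟩
    · exact absurd (h'.trans h''.symm) hθne
  have hpair2 : ((((-n) : ℤ) : ℝ) - t2 = a2 ∧ -((t2 : ℤ) : ℝ) = b2) ∨
      ((((-n) : ℤ) : ℝ) - t2 = b2 ∧ -((t2 : ℤ) : ℝ) = a2) := by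
    rcases hroots2 _ hre2a with h' | h' <;> rcases hroots2 _ hre2b with h'' | h''
    · exact absurd (h'.trans h''.symm) hηne
    · exact Or.inl ⟨h', h''⟩
    · exact Or.inr ⟨h', h''⟩
    · exact absurd (h'.trans h''.symm) hηne
  have hsumθ : (((n : ℤ) : ℝ) - t) + (-((t : ℤ) : ℝ)) = (l1 : ℝ) - m1 := by
    rcases hpair1 with ⟨e1, e2⟩ | ⟨e1, e2⟩ <;> rw [e1, e2] <;> linarith
  have hprodθ : (((n : ℤ) : ℝ) - t) * (-((t : ℤ) : ℝ)) = (m1 : ℝ) - k1 := by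
    rcases hpair1 with ⟨e1, e2⟩ | ⟨e1, e2⟩ <;> rw [e1, e2] <;> linear_combination hab1prod
  have hsumη : ((((-n) : ℤ) : ℝ) - t2) + (-((t2 : ℤ) : ℝ)) = (l2 : ℝ) - m2 := by
    rcases hpair2 with ⟨e1, e2⟩ | ⟨e1, e2⟩ <;> rw [e1, e2] <;> linarith
  have hprodη : ((((-n) : ℤ) : ℝ) - t2) * (-((t2 : ℤ) : ℝ)) = (m2 : ℝ) - k2 := by
    rcases hpair2 with ⟨e1, e2⟩ | ⟨e1, e2⟩ <;> rw [e1, e2] <;> linear_combination hab2prod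
  -- matrix facts
  have hJ1 := srg_mul_allOnes h1
  have hJ2 := srg_mul_allOnes h2
  have hq1 := srg_quad h1 _ _ hsumθ hprodθ
  have hq2 := srg_quad h2 _ _ hsumη hprodη
  have hq1' := srg_quad h1 (-((t : ℤ) : ℝ)) (((n : ℤ) : ℝ) - t)
    (by linarith) (by linear_combination hprodθ)
  have hq2' := srg_quad h2 (-((t2 : ℤ) : ℝ)) ((((-n) : ℤ) : ℝ) - t2)
    (by linarith) (by linear_combination hprodη)
  have hN0 : (0 : ℝ) < ((n : ℤ) : ℝ) := by linarith
  have hT0 : (0 : ℝ) < ((t : ℤ) : ℝ) := by linarith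
  have hT20 : (0 : ℝ) < -((t2 : ℤ) : ℝ) := by linarith
  -- strict inequality S2 : 1 ≤ n + 2 t2 - 1
  have M1 := master A1 A2 (k1 : ℝ) (k2 : ℝ) (((n : ℤ) : ℝ) - t) (-((t : ℤ) : ℝ))
    (-((t2 : ℤ) : ℝ)) ((((-n) : ℤ) : ℝ) - t2) hs1 hs2 htrA1 htrA2 htr12 hcomm
    hJ1 hJ2 hq1 hq2'
  have hS2z : (0 : ℤ) ≤ n + 2 * t2 - 1 := by
    have hM := M1.1
    rw [hcardR, hk1R, hk2R] at hM
    push_cast at hM ⊢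
    by_contra hcon
    push_neg at hcon
    have hconR : ((n : ℤ) : ℝ) + 2 * ((t2 : ℤ) : ℝ) - 1 < 0 := by
      have : (n : ℤ) + 2 * t2 - 1 < 0 := by omega
      exact_mod_cast this
    have hpos : (0 : ℝ) < ((n : ℤ) : ℝ) ^ 4 * ((t : ℤ) : ℝ) :=
      mul_pos (pow_pos hN0 4) hT0
    linarith [mul_neg_of_pos_of_neg hpos hconR, hM]
  have hS2ne : n + 2 * t2 - 1 ≠ 0 := by
    intro hz
    apply hC2
    refine ⟨?_, ?_, ?_⟩
    · have hzz : ((2 * k2 + 1 : ℕ) : ℤ) = (v : ℤ) := by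
        push_cast
        rw [hk2n, hvn]
        linear_combination (-(n : ℤ) - 1) * hz
      exact_mod_cast hzz
    · have hsq : Real.sqrt (v : ℕ) = ((n : ℤ) : ℝ) := by
        rw [show ((v : ℕ) : ℝ) = ((n : ℤ) : ℝ) ^ 2 from by exact_mod_cast hvn]
        exact Real.sqrt_sq (by linarith)
      have hzR : ((n : ℤ) : ℝ) + 2 * ((t2 : ℤ) : ℝ) - 1 = 0 := by exact_mod_cast hz
      rw [hsq, show (-1 + ((n : ℤ) : ℝ)) / 2 = -((t2 : ℤ) : ℝ) by linarith]
      exact hre2b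
    · have hsq : Real.sqrt (v : ℕ) = ((n : ℤ) : ℝ) := by
        rw [show ((v : ℕ) : ℝ) = ((n : ℤ) : ℝ) ^ 2 from by exact_mod_cast hvn]
        exact Real.sqrt_sq (by linarith)
      have hzR : ((n : ℤ) : ℝ) + 2 * ((t2 : ℤ) : ℝ) - 1 = 0 := by exact_mod_cast hz
      rw [hsq, show (-1 - ((n : ℤ) : ℝ)) / 2 = (((-n) : ℤ) : ℝ) - ((t2 : ℤ) : ℝ) by
        push_cast; linarith]
      exact hre2a
  have hS2R : (1 : ℝ) ≤ ((n : ℤ) : ℝ) + 2 * ((t2 : ℤ) : ℝ) - 1 := by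
    have : (1 : ℤ) ≤ n + 2 * t2 - 1 := by omega
    exact_mod_cast this
  -- strict inequality S1 : 1 ≤ n + 1 - 2 t
  have M2 := master A1 A2 (k1 : ℝ) (k2 : ℝ) (-((t : ℤ) : ℝ)) (((n : ℤ) : ℝ) - t)
    ((((-n) : ℤ) : ℝ) - t2) (-((t2 : ℤ) : ℝ)) hs1 hs2 htrA1 htrA2 htr12 hcomm
    hJ1 hJ2 hq1' hq2
  have hS1z : (0 : ℤ) ≤ n + 1 - 2 * t := by
    have hM := M2.1
    rw [hcardR, hk1R, hk2R] at hM
    push_cast at hM ⊢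
    by_contra hcon
    push_neg at hcon
    have hconR : ((n : ℤ) : ℝ) + 1 - 2 * ((t : ℤ) : ℝ) < 0 := by
      have : (n : ℤ) + 1 - 2 * t < 0 := by omega
      exact_mod_cast this
    have hpos : (0 : ℝ) < ((n : ℤ) : ℝ) ^ 4 * (-((t2 : ℤ) : ℝ)) :=
      mul_pos (pow_pos hN0 4) hT20
    linarith [mul_neg_of_pos_of_neg hpos hconR, hM]
  have hS1ne : n + 1 - 2 * t ≠ 0 := by
    intro hz
    apply hC1
    refine ⟨?_, ?_, ?_⟩
    · have hzz : ((2 * k1 + 1 : ℕ) : ℤ) = (v : ℤ) := by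
        push_cast
        rw [hk1n, hvn]
        linear_combination (-(n : ℤ) + 1) * hz
      exact_mod_cast hzz
    · have hsq : Real.sqrt (v : ℕ) = ((n : ℤ) : ℝ) := by
        rw [show ((v : ℕ) : ℝ) = ((n : ℤ) : ℝ) ^ 2 from by exact_mod_cast hvn]
        exact Real.sqrt_sq (by linarith)
      have hzR : ((n : ℤ) : ℝ) + 1 - 2 * ((t : ℤ) : ℝ) = 0 := by exact_mod_cast hz
      rw [hsq, show (-1 + ((n : ℤ) : ℝ)) / 2 = ((n : ℤ) : ℝ) - ((t : ℤ) : ℝ) by linarith]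
      exact hre1a
    · have hsq : Real.sqrt (v : ℕ) = ((n : ℤ) : ℝ) := by
        rw [show ((v : ℕ) : ℝ) = ((n : ℤ) : ℝ) ^ 2 from by exact_mod_cast hvn]
        exact Real.sqrt_sq (by linarith)
      have hzR : ((n : ℤ) : ℝ) + 1 - 2 * ((t : ℤ) : ℝ) = 0 := by exact_mod_cast hz
      rw [hsq, show (-1 - ((n : ℤ) : ℝ)) / 2 = -((t : ℤ) : ℝ) by linarith]
      exact hre1b
  have hS1R : (1 : ℝ) ≤ ((n : ℤ) : ℝ) + 1 - 2 * ((t : ℤ) : ℝ) := by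
    have : (1 : ℤ) ≤ n + 1 - 2 * t := by omega
    exact_mod_cast this
  -- conclusion
  intro θ hθ η hη
  simp only [Set.mem_insert_iff, Set.mem_singleton_iff] at hθ hη
  have hθv : θ = ((n : ℤ) : ℝ) - t ∨ θ = -((t : ℤ) : ℝ) := by
    rcases hθ with h | h <;> rcases hpair1 with ⟨e1, e2⟩ | ⟨e1, e2⟩
    · exact Or.inl (h.trans e1.symm)
    · exact Or.inr (h.trans e2.symm)
    · exact Or.inr (h.trans e2.symm)
    · exact Or.inl (h.trans e1.symm)
  have hηv : η = (((-n) : ℤ) : ℝ) - t2 ∨ η = -((t2 : ℤ) : ℝ) := by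
    rcases hη with h | h <;> rcases hpair2 with ⟨e1, e2⟩ | ⟨e1, e2⟩
    · exact Or.inl (h.trans e1.symm)
    · exact Or.inr (h.trans e2.symm)
    · exact Or.inr (h.trans e2.symm)
    · exact Or.inl (h.trans e1.symm)
  rcases hθv with hθv | hθv <;> rcases hηv with hηv | hηv <;> subst hθv <;> subst hηv
  · -- θ = n - t, η = -n - t2 : use (θ', η') = (-t, -t2)
    refine (master A1 A2 (k1 : ℝ) (k2 : ℝ) (((n : ℤ) : ℝ) - t) (-((t : ℤ) : ℝ))
      ((((-n) : ℤ) : ℝ) - t2) (-((t2 : ℤ) : ℝ)) hs1 hs2 htrA1 htrA2 htr12 hcomm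
      hJ1 hJ2 hq1 hq2).2 ?_
    rw [hcardR, hk1R, hk2R]
    push_cast
    apply ne_of_lt
    linarith [mul_pos (mul_pos hT0 hT20) (pow_pos hN0 2)]
  · -- θ = n - t, η = -t2 : use (θ', η') = (-t, -n - t2)
    refine (master A1 A2 (k1 : ℝ) (k2 : ℝ) (((n : ℤ) : ℝ) - t) (-((t : ℤ) : ℝ))
      (-((t2 : ℤ) : ℝ)) ((((-n) : ℤ) : ℝ) - t2) hs1 hs2 htrA1 htrA2 htr12 hcomm
      hJ1 hJ2 hq1 hq2').2 ?_
    rw [hcardR, hk1R, hk2R]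
    push_cast
    apply ne_of_gt
    have hQ : (0 : ℝ) < ((t : ℤ) : ℝ) * ((n : ℤ) : ℝ) ^ 2 := mul_pos hT0 (pow_pos hN0 2)
    have hP : (0 : ℝ) ≤ (((t : ℤ) : ℝ) * ((n : ℤ) : ℝ) ^ 2) *
        ((((n : ℤ) : ℝ) + 2 * ((t2 : ℤ) : ℝ) - 1) - 1) :=
      mul_nonneg hQ.le (by linarith)
    linarith [hP, hQ]
  · -- θ = -t, η = -n - t2 : use (θ', η') = (n - t, -t2)
    refine (master A1 A2 (k1 : ℝ) (k2 : ℝ) (-((t : ℤ) : ℝ)) (((n : ℤ) : ℝ) - t)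
      ((((-n) : ℤ) : ℝ) - t2) (-((t2 : ℤ) : ℝ)) hs1 hs2 htrA1 htrA2 htr12 hcomm
      hJ1 hJ2 hq1' hq2).2 ?_
    rw [hcardR, hk1R, hk2R]
    push_cast
    apply ne_of_gt
    have hQ : (0 : ℝ) < (-((t2 : ℤ) : ℝ)) * ((n : ℤ) : ℝ) ^ 2 := mul_pos hT20 (pow_pos hN0 2)
    have hP : (0 : ℝ) ≤ ((-((t2 : ℤ) : ℝ)) * ((n : ℤ) : ℝ) ^ 2) *
        ((((n : ℤ) : ℝ) + 1 - 2 * ((t : ℤ) : ℝ)) - 1) :=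
      mul_nonneg hQ.le (by linarith)
    linarith [hP, hQ]
  · -- θ = -t, η = -t2 : use (θ', η') = (n - t, -n - t2)
    refine (master A1 A2 (k1 : ℝ) (k2 : ℝ) (-((t : ℤ) : ℝ)) (((n : ℤ) : ℝ) - t)
      (-((t2 : ℤ) : ℝ)) ((((-n) : ℤ) : ℝ) - t2) hs1 hs2 htrA1 htrA2 htr12 hcomm
      hJ1 hJ2 hq1' hq2').2 ?_
    rw [hcardR, hk1R, hk2R]
    push_cast
    apply ne_of_lt
    have hA : (0 : ℝ) < ((n : ℤ) : ℝ) - ((t : ℤ) : ℝ) := by linarith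
    have hB : (0 : ℝ) < ((n : ℤ) : ℝ) + ((t2 : ℤ) : ℝ) := by linarith
    have hC : (0 : ℝ) ≤ (((t : ℤ) : ℝ) - 1) * (1 - ((t2 : ℤ) : ℝ)) :=
      mul_nonneg (by linarith) (by linarith)
    have hQ : (0 : ℝ) < ((n : ℤ) : ℝ) ^ 2 *
        ((((n : ℤ) : ℝ) - ((t : ℤ) : ℝ)) * (((n : ℤ) : ℝ) + ((t2 : ℤ) : ℝ)) +
          (((t : ℤ) : ℝ) - 1) * (1 - ((t2 : ℤ) : ℝ))) :=
      mul_pos (pow_pos hN0 2) (by nlinarith [mul_pos hA hB])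
    linarith [hQ]
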